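/- Let β > 0 and K(η) = e^{η²/4}. If φ : (0,∞) → ℝ is measurable with ∫₀^∞ (φ(η)² + φ'(η)²) K(η)^β dη < ∞ (φ' the distributional derivative), then the function η ↦ K(η)^{β/2} φ(η) has a representative which is Hölder continuous of exponent 1/2 on [0,∞). -/

import Mathlib

open MeasureTheory Real Set

noncomputable def Kw (η : ℝ) : ℝ := Real.exp (η ^ 2 / 4)

open Filter Topology

/-!
The derivative of `ψ = K^{β/2} φ` is `K^{β/2} φ' + (β η / 4) K^{β/2} φ`, so `ψ' ∈ L²(0, ∞)` once
the weighted Hardy inequality `∫ η² φ² K^β < ∞` is known. Then `ψ` is, up to a constant, the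
primitive of an `L²` function, and Cauchy–Schwarz gives `|ψ x - ψ y| ≤ ‖ψ'‖₂ |x - y|^{1/2}`, which
also defines `ψ` at `0`. The Hardy inequality comes from integrating
`(η K^β φ²)' ≥ (β/4) η² K^β φ² - (4/β) K^β φ'²` over `[1, b]` along a sequence `b → ∞` on which the
boundary term `b K^β(b) φ(b)²` stays bounded; such `b` exist in every `(a, 2a]` because `φ² K^β` is
integrable.

As `φ'` is not assumed measurable, it is first traded for `deriv φ`: `φ` varies no faster than the
primitive of the measurable majorant `√(h / K^β)` of `|φ'|` (`h` the integrand of the hypothesis),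
so it is locally absolutely continuous and `|deriv φ|` lies below that majorant almost everywhere.
-/

lemma Kw_rpow (γ t : ℝ) : Kw t ^ γ = exp (γ * t ^ 2 / 4) := by
  rw [Kw, ← exp_mul]
  ring_nf

lemma Kw_rpow_pos (γ t : ℝ) : 0 < Kw t ^ γ := by
  rw [Kw_rpow]
  exact exp_pos _

lemma one_le_Kw_rpow {γ : ℝ} (hγ : 0 ≤ γ) (t : ℝ) : 1 ≤ Kw t ^ γ := by
  rw [Kw_rpow]
  exact one_le_exp (by positivity)

lemma Kw_rpow_half_sq (γ t : ℝ) : (Kw t ^ (γ / 2)) ^ 2 = Kw t ^ γ := by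
  rw [Kw_rpow, Kw_rpow, sq, ← exp_add]
  ring_nf

lemma hasDerivAt_Kw_rpow (γ t : ℝ) :
    HasDerivAt (fun s => Kw s ^ γ) (γ * t / 2 * Kw t ^ γ) t := by
  simp_rw [Kw_rpow]
  convert ((hasDerivAt_pow 2 t).const_mul γ |>.div_const 4).exp using 1
  ring

lemma contDiff_Kw_rpow (γ : ℝ) : ContDiff ℝ 1 (fun s => Kw s ^ γ) := by
  simp_rw [Kw_rpow]
  fun_prop

theorem AbsolutelyContinuousOnInterval.of_dist_le {X Y : Type*} [PseudoMetricSpace X]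
    [PseudoMetricSpace Y] {f : ℝ → X} {g : ℝ → Y} {a b : ℝ}
    (hg : AbsolutelyContinuousOnInterval g a b)
    (hfg : ∀ x ∈ uIcc a b, ∀ y ∈ uIcc a b, dist (f x) (f y) ≤ dist (g x) (g y)) :
    AbsolutelyContinuousOnInterval f a b := by
  rw [absolutelyContinuousOnInterval_iff] at hg ⊢
  intro ε hε
  obtain ⟨δ, hδ, hgδ⟩ := hg ε hε
  refine ⟨δ, hδ, fun E hE hlen => (Finset.sum_le_sum fun i hi => ?_).trans_lt (hgδ E hE hlen)⟩
  exact hfg _ (hE.1 i hi).1 _ (hE.1 i hi).2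

theorem norm_le_of_hasDerivAt_of_dist_le {E F : Type*} [NormedAddCommGroup E] [NormedSpace ℝ E]
    [NormedAddCommGroup F] [NormedSpace ℝ F] {f : ℝ → E} {g : ℝ → F} {f' : E} {g' : F} {x : ℝ}
    (hf : HasDerivAt f f' x) (hg : HasDerivAt g g' x)
    (hfg : ∀ᶠ y in 𝓝 x, dist (f y) (f x) ≤ dist (g y) (g x)) : ‖f'‖ ≤ ‖g'‖ := by
  refine le_of_tendsto_of_tendsto (hasDerivAt_iff_tendsto_slope.1 hf).norm
    (hasDerivAt_iff_tendsto_slope.1 hg).norm ?_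
  filter_upwards [nhdsWithin_le_nhds hfg] with y hy
  simp only [slope_def_module, norm_smul, ← dist_eq_norm]
  gcongr

theorem abs_intervalIntegral_le_sqrt_mul_sqrt {g : ℝ → ℝ} {a b : ℝ} (hab : a ≤ b)
    (hg : MemLp g 2 (volume.restrict (Ioc a b))) :
    |∫ t in a..b, g t| ≤ sqrt (∫ t in Ioc a b, g t ^ 2) * sqrt (b - a) := by
  have hCS := integral_mul_le_Lp_mul_Lq_of_nonneg Real.HolderConjugate.two_two
    (ae_of_all _ fun t => abs_nonneg (g t)) (ae_of_all _ fun _ => zero_le_one)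
    (by rw [ENNReal.ofReal_ofNat]; exact hg.abs) (memLp_const (1 : ℝ))
    (μ := volume.restrict (Ioc a b))
  simp only [mul_one, one_pow, integral_const, Real.rpow_two, sq_abs, ← sqrt_eq_rpow,
    smul_eq_mul, measureReal_restrict_apply_univ, Real.volume_real_Ioc_of_le hab] at hCS
  rw [intervalIntegral.integral_of_le hab]
  exact (abs_integral_le_integral_abs).trans hCS

lemma ae_differentiableAt_of_forall_absolutelyContinuousOnInterval {φ : ℝ → ℝ}
    (hφ : ∀ x y : ℝ, 0 < x → 0 < y → AbsolutelyContinuousOnInterval φ x y) :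
    ∀ᵐ t, 0 < t → DifferentiableAt ℝ φ t := by
  have h := ae_all_iff.2 fun n : ℕ =>
    (hφ (1 / (n + 1)) (n + 1) (by positivity) (by positivity)).ae_differentiableAt
  filter_upwards [h] with t ht htpos
  obtain ⟨n, hn⟩ := exists_nat_gt (max t t⁻¹)
  refine ht n (mem_uIcc.2 (Or.inl ⟨?_, ?_⟩))
  · rw [one_div]
    exact ((inv_lt_comm₀ (by positivity) htpos).2 (by linarith [le_max_right t t⁻¹])).le
  · linarith [le_max_left t t⁻¹]

lemma continuousOn_Ioi_of_forall_absolutelyContinuousOnInterval {φ : ℝ → ℝ}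
    (hφ : ∀ x y : ℝ, 0 < x → 0 < y → AbsolutelyContinuousOnInterval φ x y) :
    ContinuousOn φ (Ioi 0) := fun t (ht : 0 < t) =>
  ((hφ (t / 2) (2 * t) (by positivity) (by positivity)).continuousOn.continuousAt
    (by rw [uIcc_of_le (by linarith)]; exact Icc_mem_nhds (by linarith) (by linarith)))
    |>.continuousWithinAt

lemma dist_le_dist_intervalIntegral_of_abs_le {φ φ' ρ : ℝ → ℝ}
    (hAC : ∀ x y : ℝ, 0 < x → 0 < y → φ y = φ x + ∫ t in x..y, φ' t)
    (hρ : LocallyIntegrable ρ) (hφ'ρ : ∀ t, 0 < t → |φ' t| ≤ ρ t) (c : ℝ) {x y : ℝ}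
    (hx : 0 < x) (hy : 0 < y) :
    dist (φ x) (φ y) ≤ dist (∫ t in c..x, ρ t) (∫ t in c..y, ρ t) := by
  have hρi : ∀ a b, IntervalIntegrable ρ volume a b := fun a b =>
    (hρ.integrableOn_isCompact isCompact_uIcc).intervalIntegrable
  rw [dist_eq_norm, dist_eq_norm, intervalIntegral.integral_interval_sub_left (hρi c x) (hρi c y),
    hAC y x hy hx, add_sub_cancel_left]
  refine intervalIntegral.norm_integral_le_abs_of_norm_le ?_ (hρi y x)
  refine ae_restrict_of_forall_mem measurableSet_uIoc fun t ht => hφ'ρ t ?_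
  exact (lt_min hy hx).trans ht.1

lemma absolutelyContinuousOnInterval_of_abs_le {φ φ' ρ : ℝ → ℝ}
    (hAC : ∀ x y : ℝ, 0 < x → 0 < y → φ y = φ x + ∫ t in x..y, φ' t)
    (hρ : LocallyIntegrable ρ) (hφ'ρ : ∀ t, 0 < t → |φ' t| ≤ ρ t) {a b : ℝ}
    (ha : 0 < a) (hb : 0 < b) : AbsolutelyContinuousOnInterval φ a b := by
  refine ((hρ.integrableOn_isCompact isCompact_uIcc).intervalIntegrable
    |>.absolutelyContinuousOnInterval_intervalIntegral left_mem_uIcc).of_dist_le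
      fun x hx y hy => dist_le_dist_intervalIntegral_of_abs_le hAC hρ hφ'ρ a ?_ ?_
  · exact (lt_min ha hb).trans_le hx.1
  · exact (lt_min ha hb).trans_le hy.1

lemma ae_abs_deriv_le_of_abs_le {φ φ' ρ : ℝ → ℝ}
    (hAC : ∀ x y : ℝ, 0 < x → 0 < y → φ y = φ x + ∫ t in x..y, φ' t)
    (hρ : LocallyIntegrable ρ) (hφ'ρ : ∀ t, 0 < t → |φ' t| ≤ ρ t) :
    ∀ᵐ t, 0 < t → |deriv φ t| ≤ ρ t := by
  filter_upwards [LocallyIntegrable.ae_hasDerivAt_integral hρ] with t hPt ht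
  have hρt : |ρ t| = ρ t := abs_of_nonneg ((abs_nonneg _).trans (hφ'ρ t ht))
  by_cases hd : DifferentiableAt ℝ φ t
  · rw [← hρt]
    refine norm_le_of_hasDerivAt_of_dist_le hd.hasDerivAt (hPt 0) ?_
    filter_upwards [Ioi_mem_nhds ht] with y hy
    exact dist_le_dist_intervalIntegral_of_abs_le hAC hρ hφ'ρ 0 hy ht
  · rw [deriv_zero_of_not_differentiableAt hd, abs_zero, ← hρt]
    exact abs_nonneg _

lemma forall_absolutelyContinuousOnInterval_and_integrableOn_deriv_sq {β : ℝ} (hβ : 0 ≤ β)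
    {φ φ' : ℝ → ℝ} (hAC : ∀ x y : ℝ, 0 < x → 0 < y → φ y = φ x + ∫ t in x..y, φ' t)
    (hInt : Integrable (fun η => ((φ η) ^ 2 + (φ' η) ^ 2) * (Kw η) ^ β)
      (volume.restrict (Ioi (0:ℝ)))) :
    (∀ x y : ℝ, 0 < x → 0 < y → AbsolutelyContinuousOnInterval φ x y) ∧
      IntegrableOn (fun t => deriv φ t ^ 2 * Kw t ^ β) (Ioi 0) := by
  set h := fun η => ((φ η) ^ 2 + (φ' η) ^ 2) * (Kw η) ^ β
  set ρ := (Ioi (0:ℝ)).indicator fun t => sqrt (h t / Kw t ^ β) with hρ_def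
  have hh : ∀ t, 0 ≤ h t := fun t => mul_nonneg (by positivity) (Kw_rpow_pos β t).le
  have hq : ∀ t, 0 ≤ h t / Kw t ^ β := fun t => div_nonneg (hh t) (Kw_rpow_pos β t).le
  have hρ_sq : ∀ t, 0 < t → ρ t ^ 2 = h t / Kw t ^ β := fun t ht => by
    rw [hρ_def, indicator_of_mem (mem_Ioi.2 ht), sq_sqrt (hq t)]
  have hφ'ρ : ∀ t, 0 < t → |φ' t| ≤ ρ t := fun t ht => by
    rw [hρ_def, indicator_of_mem (mem_Ioi.2 ht), le_sqrt (abs_nonneg _) (hq t),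
      le_div_iff₀ (Kw_rpow_pos β t), sq_abs]
    nlinarith [Kw_rpow_pos β t, sq_nonneg (φ t)]
  have hρ : LocallyIntegrable ρ := by
    have hm : AEStronglyMeasurable ρ volume :=
      (aestronglyMeasurable_indicator_iff measurableSet_Ioi).2 <|
        continuous_sqrt.comp_aestronglyMeasurable
          (hInt.1.div₀ (contDiff_Kw_rpow β).continuous.aestronglyMeasurable)
    have hρ2 : Integrable (fun t => ρ t ^ 2) := by
      refine ((integrable_indicator_iff measurableSet_Ioi).2 hInt).mono'
        ((continuous_pow 2).comp_aestronglyMeasurable hm) (ae_of_all _ fun t => ?_)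
      by_cases ht : 0 < t
      · rw [hρ_sq t ht, indicator_of_mem (mem_Ioi.2 ht), norm_of_nonneg (hq t)]
        exact div_le_self (hh t) (one_le_Kw_rpow hβ t)
      · simp [ρ, indicator_of_notMem (show t ∉ Ioi 0 from ht)]
    exact ((memLp_two_iff_integrable_sq hm).2 hρ2).locallyIntegrable one_le_two
  refine ⟨fun x y hx hy => absolutelyContinuousOnInterval_of_abs_le hAC hρ hφ'ρ hx hy, ?_⟩
  refine hInt.mono' (((measurable_deriv φ).pow_const 2).aestronglyMeasurable.mul
    (contDiff_Kw_rpow β).continuous.aestronglyMeasurable) ?_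
  filter_upwards [ae_restrict_mem measurableSet_Ioi,
    ae_restrict_of_ae (ae_abs_deriv_le_of_abs_le hAC hρ hφ'ρ)] with t ht hdt
  have hK := Kw_rpow_pos β t
  rw [norm_of_nonneg (by positivity), ← div_mul_cancel₀ (h t) hK.ne', ← hρ_sq t ht]
  exact mul_le_mul_of_nonneg_right (sq_le_sq' (neg_le_of_abs_le (hdt ht)) (le_of_abs_le (hdt ht)))
    hK.le

section WeightedHardy

variable {β : ℝ} {φ : ℝ → ℝ}

lemma integral_sq_mul_sq_mul_Kw_rpow_le (hβ : 0 < β)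
    (hφ : ∀ x y : ℝ, 0 < x → 0 < y → AbsolutelyContinuousOnInterval φ x y)
    (hdφ : IntegrableOn (fun t => deriv φ t ^ 2 * Kw t ^ β) (Ioi 0)) {b : ℝ} (hb : 1 ≤ b) :
    β / 4 * ∫ t in (1:ℝ)..b, t ^ 2 * φ t ^ 2 * Kw t ^ β ≤
      b * Kw b ^ β * φ b ^ 2 + 4 / β * ∫ t in Ioi 0, deriv φ t ^ 2 * Kw t ^ β := by
  set u : ℝ → ℝ := fun t => t * Kw t ^ β * φ t ^ 2 with hu_def
  have hφb := hφ 1 b one_pos (by linarith)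
  have hsub : Ioc 1 b ⊆ Ioi 0 := fun t ht => zero_lt_one.trans ht.1
  have hu : AbsolutelyContinuousOnInterval u 1 b := by
    rw [hu_def]
    simpa only [sq, id] using ((contDiff_id.mul (contDiff_Kw_rpow β)).contDiffOn
      |>.absolutelyContinuousOnInterval).fun_mul (hφb.fun_mul hφb)
  have hpt : ∀ᵐ t ∂(volume.restrict (Icc 1 b)), β / 4 * (t ^ 2 * φ t ^ 2 * Kw t ^ β) ≤
      deriv u t + 4 / β * (deriv φ t ^ 2 * Kw t ^ β) := by
    filter_upwards [ae_restrict_mem measurableSet_Icc,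
      ae_restrict_of_ae (ae_differentiableAt_of_forall_absolutelyContinuousOnInterval hφ)]
      with t ht hd
    rw [(((hasDerivAt_id' t).fun_mul (hasDerivAt_Kw_rpow β t)).fun_mul
      ((hd (by linarith [ht.1])).hasDerivAt.fun_pow 2)).deriv]
    have hK := Kw_rpow_pos β t
    -- the cross term `2 t K^β φ φ'` is absorbed by completing the square
    have hsq : Kw t ^ β / β * (β * t * φ t / 2 + 2 * deriv φ t) ^ 2 = Kw t ^ β *
        (β / 4 * t ^ 2 * φ t ^ 2 + 2 * t * φ t * deriv φ t + 4 / β * deriv φ t ^ 2) := by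
      field_simp
      ring
    have : 0 ≤ Kw t ^ β / β * (β * t * φ t / 2 + 2 * deriv φ t) ^ 2 := by positivity
    nlinarith [mul_nonneg hK.le (sq_nonneg (φ t))]
  have hF : IntervalIntegrable (fun t => t ^ 2 * φ t ^ 2 * Kw t ^ β) volume 1 b :=
    (((continuousOn_id.pow 2).mul (hφb.continuousOn.pow 2)).mul
      (contDiff_Kw_rpow β).continuous.continuousOn).intervalIntegrable
  have hG : IntervalIntegrable (fun t => deriv φ t ^ 2 * Kw t ^ β) volume 1 b :=
    (intervalIntegrable_iff_integrableOn_Ioc_of_le hb).2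
      (hdφ.mono_set hsub)
  calc β / 4 * ∫ t in (1:ℝ)..b, t ^ 2 * φ t ^ 2 * Kw t ^ β
      = ∫ t in (1:ℝ)..b, β / 4 * (t ^ 2 * φ t ^ 2 * Kw t ^ β) :=
        (intervalIntegral.integral_const_mul _ _).symm
    _ ≤ ∫ t in (1:ℝ)..b, (deriv u t + 4 / β * (deriv φ t ^ 2 * Kw t ^ β)) :=
        intervalIntegral.integral_mono_ae_restrict hb (hF.const_mul _)
          (hu.intervalIntegrable_deriv.add (hG.const_mul _)) hpt
    _ = u b - u 1 + 4 / β * ∫ t in (1:ℝ)..b, deriv φ t ^ 2 * Kw t ^ β := by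
        rw [intervalIntegral.integral_add hu.intervalIntegrable_deriv (hG.const_mul _),
          hu.integral_deriv_eq_sub, intervalIntegral.integral_const_mul]
    _ ≤ u b + 4 / β * ∫ t in Ioi 0, deriv φ t ^ 2 * Kw t ^ β := by
        gcongr ?_ + 4 / β * ?_
        · exact sub_le_self _ (by positivity [Kw_rpow_pos β 1])
        · rw [intervalIntegral.integral_of_le hb]
          exact setIntegral_mono_set hdφ
            (ae_of_all _ fun t => mul_nonneg (sq_nonneg _) (Kw_rpow_pos β t).le)
            hsub.eventuallyLE

lemma exists_mem_Ioc_mul_Kw_rpow_mul_sq_le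
    (hφ : ∀ x y : ℝ, 0 < x → 0 < y → AbsolutelyContinuousOnInterval φ x y)
    (hφ2 : IntegrableOn (fun t => φ t ^ 2 * Kw t ^ β) (Ioi 0)) {a : ℝ} (ha : 0 < a) :
    ∃ b ∈ Ioc a (2 * a), b * Kw b ^ β * φ b ^ 2 ≤ 2 * ∫ t in Ioi 0, φ t ^ 2 * Kw t ^ β := by
  have hsub : Ioc a (2 * a) ⊆ Ioi 0 := fun t ht => ha.trans ht.1
  have hvol : volume (Ioc a (2 * a)) = ENNReal.ofReal a := by
    rw [Real.volume_Ioc]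
    ring_nf
  have hu : IntegrableOn (fun t => t * Kw t ^ β * φ t ^ 2) (Ioc a (2 * a)) := by
    refine ContinuousOn.integrableOn_Icc ?_ |>.mono_set Ioc_subset_Icc_self
    rw [← uIcc_of_le (by linarith)]
    exact (continuousOn_id.mul (contDiff_Kw_rpow β).continuous.continuousOn).mul
      ((hφ a (2 * a) ha (by linarith)).continuousOn.pow 2)
  obtain ⟨b, hb, hle⟩ := exists_le_setAverage (by simp [hvol, ha]) (by simp [hvol]) hu
  refine ⟨b, hb, hle.trans ?_⟩
  rw [setAverage_eq, smul_eq_mul, measureReal_def, hvol, ENNReal.toReal_ofReal ha.le,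
    inv_mul_le_iff₀ ha]
  calc ∫ t in Ioc a (2 * a), t * Kw t ^ β * φ t ^ 2
      ≤ ∫ t in Ioc a (2 * a), 2 * a * (φ t ^ 2 * Kw t ^ β) :=
        setIntegral_mono_on hu ((hφ2.mono_set hsub).const_mul _) measurableSet_Ioc
          fun t ht => by nlinarith [ht.2, mul_nonneg (sq_nonneg (φ t)) (Kw_rpow_pos β t).le]
    _ ≤ 2 * a * ∫ t in Ioi 0, φ t ^ 2 * Kw t ^ β := by
        rw [integral_const_mul]
        exact mul_le_mul_of_nonneg_left (setIntegral_mono_set hφ2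
          (ae_of_all _ fun t => mul_nonneg (sq_nonneg _) (Kw_rpow_pos β t).le) hsub.eventuallyLE)
          (by positivity)
    _ = a * (2 * ∫ t in Ioi 0, φ t ^ 2 * Kw t ^ β) := by ring

theorem integrableOn_sq_mul_sq_mul_Kw_rpow (hβ : 0 < β)
    (hφ : ∀ x y : ℝ, 0 < x → 0 < y → AbsolutelyContinuousOnInterval φ x y)
    (hφ2 : IntegrableOn (fun t => φ t ^ 2 * Kw t ^ β) (Ioi 0))
    (hdφ : IntegrableOn (fun t => deriv φ t ^ 2 * Kw t ^ β) (Ioi 0)) :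
    IntegrableOn (fun t => t ^ 2 * φ t ^ 2 * Kw t ^ β) (Ioi 0) := by
  set C := ∫ t in Ioi 0, φ t ^ 2 * Kw t ^ β
  set D := ∫ t in Ioi 0, deriv φ t ^ 2 * Kw t ^ β
  have hF0 : ∀ t, 0 ≤ t ^ 2 * φ t ^ 2 * Kw t ^ β := fun t =>
    mul_nonneg (by positivity) (Kw_rpow_pos β t).le
  have hFc : ContinuousOn (fun t => t ^ 2 * φ t ^ 2 * Kw t ^ β) (Ioi 0) :=
    ((continuousOn_id.pow 2).mul
      ((continuousOn_Ioi_of_forall_absolutelyContinuousOnInterval hφ).pow 2)).mul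
      (contDiff_Kw_rpow β).continuous.continuousOn
  have hhead : IntegrableOn (fun t => t ^ 2 * φ t ^ 2 * Kw t ^ β) (Ioc 0 1) := by
    refine (hφ2.mono_set Ioc_subset_Ioi_self).mono'
      ((hFc.mono Ioc_subset_Ioi_self).aestronglyMeasurable measurableSet_Ioc) ?_
    filter_upwards [ae_restrict_mem measurableSet_Ioc] with t ht
    rw [norm_of_nonneg (hF0 t)]
    have : t ^ 2 ≤ 1 := by nlinarith [ht.1, ht.2]
    nlinarith [mul_nonneg (sq_nonneg (φ t)) (Kw_rpow_pos β t).le]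
  choose b hb hub using fun n : ℕ =>
    exists_mem_Ioc_mul_Kw_rpow_mul_sq_le hφ hφ2 (a := n + 1) (by positivity)
  have hb1 : ∀ n, 1 ≤ b n := fun n => by linarith [(hb n).1, (n.cast_nonneg : (0:ℝ) ≤ n)]
  have htail : IntegrableOn (fun t => t ^ 2 * φ t ^ 2 * Kw t ^ β) (Ioi 1) := by
    refine integrableOn_Ioi_of_intervalIntegral_norm_bounded (4 / β * (2 * C + 4 / β * D)) 1
      (fun n => (hFc.mono fun t ht => zero_lt_one.trans_le ht.1).integrableOn_Icc.mono_set
        Ioc_subset_Icc_self)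
      (tendsto_atTop_mono (fun n : ℕ => show (n : ℝ) ≤ b n by linarith [(hb n).1])
        tendsto_natCast_atTop_atTop)
      (Eventually.of_forall fun n => ?_)
    simp_rw [norm_of_nonneg (hF0 _)]
    rw [← mul_le_mul_iff_of_pos_left (by positivity : (0:ℝ) < β / 4)]
    calc β / 4 * ∫ t in (1:ℝ)..b n, t ^ 2 * φ t ^ 2 * Kw t ^ β
        ≤ b n * Kw (b n) ^ β * φ (b n) ^ 2 + 4 / β * D :=
          integral_sq_mul_sq_mul_Kw_rpow_le hβ hφ hdφ (hb1 n)
      _ ≤ 2 * C + 4 / β * D := by linarith [hub n]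
      _ = β / 4 * (4 / β * (2 * C + 4 / β * D)) := by field_simp
  simpa only [Ioc_union_Ioi_eq_Ioi zero_le_one] using hhead.union htail

theorem integrableOn_deriv_Kw_rpow_half_mul_sq (hβ : 0 < β)
    (hφ : ∀ x y : ℝ, 0 < x → 0 < y → AbsolutelyContinuousOnInterval φ x y)
    (hφ2 : IntegrableOn (fun t => φ t ^ 2 * Kw t ^ β) (Ioi 0))
    (hdφ : IntegrableOn (fun t => deriv φ t ^ 2 * Kw t ^ β) (Ioi 0)) :
    IntegrableOn (fun t => deriv (fun s => Kw s ^ (β / 2) * φ s) t ^ 2) (Ioi 0) := by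
  refine ((hdφ.const_mul 2).add ((integrableOn_sq_mul_sq_mul_Kw_rpow hβ hφ hφ2 hdφ).const_mul
    (β ^ 2 / 8))).mono' ((measurable_deriv _).pow_const 2).aestronglyMeasurable ?_
  filter_upwards [ae_restrict_mem measurableSet_Ioi,
    ae_restrict_of_ae (ae_differentiableAt_of_forall_absolutelyContinuousOnInterval hφ)]
    with t ht hd
  simp only [Pi.add_apply]
  rw [((hasDerivAt_Kw_rpow (β / 2) t).fun_mul (hd ht).hasDerivAt).deriv,
    norm_of_nonneg (sq_nonneg _), ← Kw_rpow_half_sq β t]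
  nlinarith [sq_nonneg (β / 2 * t / 2 * Kw t ^ (β / 2) * φ t - Kw t ^ (β / 2) * deriv φ t)]

end WeightedHardy

theorem abs_intervalIntegral_sub_le_of_memLp {g : ℝ → ℝ} {a : ℝ}
    (hg : MemLp g 2 (volume.restrict (Ioi a))) {c x y : ℝ} (hc : a ≤ c) (hx : a ≤ x)
    (hy : a ≤ y) :
    |(∫ t in c..x, g t) - ∫ t in c..y, g t| ≤
      sqrt (∫ t in Ioi a, g t ^ 2) * |x - y| ^ ((1:ℝ) / 2) := by
  have hmem : ∀ {u v : ℝ}, a ≤ u → MemLp g 2 (volume.restrict (Ioc u v)) := fun hu =>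
    hg.mono_measure (Measure.restrict_mono (fun t ht => hu.trans_lt ht.1) le_rfl)
  have hint : ∀ {u v : ℝ}, a ≤ u → a ≤ v → IntervalIntegrable g volume u v := fun hu hv =>
    ⟨(hmem hu).integrable one_le_two, (hmem hv).integrable one_le_two⟩
  rw [intervalIntegral.integral_interval_sub_left (hint hc hx) (hint hc hy), ← sqrt_eq_rpow]
  wlog hyx : y ≤ x generalizing x y
  · rw [intervalIntegral.integral_symm, abs_neg, abs_sub_comm]
    exact this hy hx (le_of_not_ge hyx)
  rw [abs_of_nonneg (sub_nonneg.2 hyx)]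
  refine (abs_intervalIntegral_le_sqrt_mul_sqrt hyx (hmem hy)).trans ?_
  have hsub : Ioc y x ⊆ Ioi a := fun t ht => hy.trans_lt ht.1
  exact mul_le_mul_of_nonneg_right (sqrt_le_sqrt <| setIntegral_mono_set
    ((memLp_two_iff_integrable_sq hg.1).1 hg) (ae_of_all _ fun t => sq_nonneg _) hsub.eventuallyLE)
    (sqrt_nonneg _)

/-- If `φ` (with distributional derivative `φ'`) satisfies
`∫₀^∞ (φ² + φ'²) K^β dη < ∞`, then `K^{β/2} φ` has a representative which is
Hölder continuous of exponent `1/2` on `[0,∞)`. -/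
theorem holder_embedding_weighted (β : ℝ) (hβ : 0 < β) (φ φ' : ℝ → ℝ)
    (hAC : ∀ x y : ℝ, 0 < x → 0 < y → φ y = φ x + ∫ t in x..y, φ' t)
    (hInt : Integrable (fun η => ((φ η) ^ 2 + (φ' η) ^ 2) * (Kw η) ^ β)
      (volume.restrict (Ioi (0:ℝ)))) :
    ∃ f : ℝ → ℝ,
      (∀ᵐ η ∂(volume.restrict (Ioi (0:ℝ))), f η = (Kw η) ^ (β / 2) * φ η) ∧
      ∃ L : ℝ, 0 ≤ L ∧ ∀ x y : ℝ, 0 ≤ x → 0 ≤ y →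
        |f x - f y| ≤ L * |x - y| ^ ((1:ℝ) / 2) := by
  obtain ⟨hφ, hdφ⟩ :=
    forall_absolutelyContinuousOnInterval_and_integrableOn_deriv_sq hβ.le hAC hInt
  have hφ2 : IntegrableOn (fun t => φ t ^ 2 * Kw t ^ β) (Ioi 0) :=
    hInt.mono' (((continuousOn_Ioi_of_forall_absolutelyContinuousOnInterval hφ).pow 2).mul
      (contDiff_Kw_rpow β).continuous.continuousOn |>.aestronglyMeasurable measurableSet_Ioi)
      (ae_of_all _ fun t => by
        rw [norm_of_nonneg (mul_nonneg (sq_nonneg _) (Kw_rpow_pos β t).le)]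
        nlinarith [Kw_rpow_pos β t, sq_nonneg (φ' t)])
  set ψ := fun t => Kw t ^ (β / 2) * φ t
  have hψ' : MemLp (deriv ψ) 2 (volume.restrict (Ioi 0)) :=
    (memLp_two_iff_integrable_sq (measurable_deriv ψ).aestronglyMeasurable).2
      (integrableOn_deriv_Kw_rpow_half_mul_sq hβ hφ hφ2 hdφ)
  refine ⟨fun x => ψ 1 + ∫ t in (1:ℝ)..x, deriv ψ t, ?_,
    sqrt (∫ t in Ioi 0, deriv ψ t ^ 2), sqrt_nonneg _, fun x y hx hy => ?_⟩
  · filter_upwards [ae_restrict_mem measurableSet_Ioi] with η (hη : 0 < η)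
    have hψ : AbsolutelyContinuousOnInterval ψ 1 η :=
      (contDiff_Kw_rpow (β / 2)).contDiffOn.absolutelyContinuousOnInterval.fun_mul
        (hφ 1 η one_pos hη)
    rw [hψ.integral_deriv_eq_sub, add_sub_cancel]
  · rw [add_sub_add_left_eq_sub]
    exact abs_intervalIntegral_sub_le_of_memLp hψ' zero_le_one hx hy
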